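/- arXiv:1008.2583 — 2 statements merged into one kernel-verified Lean document; each statement's English description precedes it below -/
import Mathlib

section
/- Let k ≥ 2 be an even integer, n ≥ 3k an integer, and let S be a maximum independent set of P(n,k). If a 2k-segment I_t satisfies |I_t ∩ S| = 2k, then none of the four vertices u_{t+2k}, v_{t+2k}, u_{t−1}, v_{t−1} (indices modulo n) belongs to S. -/
namespace GP

/-- Adjacency generating relation for the generalized Petersen graph `P(n,k)`:
`Sum.inl i` is the outer vertex `u_i`, `Sum.inr i` is the inner vertex `v_i`. -/
def adjFun (n k : ℕ) : (ZMod n ⊕ ZMod n) → (ZMod n ⊕ ZMod n) → Prop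
  | Sum.inl i, Sum.inl j => j = i + 1
  | Sum.inl i, Sum.inr j => j = i
  | Sum.inr i, Sum.inr j => j = i + (k : ZMod n)
  | _, _ => False

/-- The generalized Petersen graph `P(n,k)`. -/
def P (n k : ℕ) : SimpleGraph (ZMod n ⊕ ZMod n) :=
  SimpleGraph.fromRel (adjFun n k)

/-- `s` is an independent set of vertices in `G`. -/
def IsIndep {V : Type*} (G : SimpleGraph V) (s : Finset V) : Prop :=
  ∀ v ∈ s, ∀ w ∈ s, ¬ G.Adj v w

/-- The independence number of a graph. -/
noncomputable def indepNum {V : Type*} (G : SimpleGraph V) : ℕ :=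
  sSup {m | ∃ s : Finset V, IsIndep G s ∧ s.card = m}

/-- `α(P(n,k))`. -/
noncomputable def alpha (n k : ℕ) : ℕ := indepNum (P n k)

/-- The outer vertex `u_i`. -/
def u (n : ℕ) (i : ZMod n) : ZMod n ⊕ ZMod n := Sum.inl i

/-- The inner vertex `v_i`. -/
def v (n : ℕ) (i : ZMod n) : ZMod n ⊕ ZMod n := Sum.inr i

/-- The `2k`-segment `I_t = {u_t, …, u_{t+2k-1}} ∪ {v_t, …, v_{t+2k-1}}`. -/
def segment (n k : ℕ) (t : ZMod n) : Finset (ZMod n ⊕ ZMod n) :=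
  ((Finset.range (2*k)).image fun j : ℕ => u n (t + (j : ZMod n))) ∪
  ((Finset.range (2*k)).image fun j : ℕ => v n (t + (j : ZMod n)))

/-!
Let `F` and `G` be the offsets `j < 2k` with `u_{t+j} ∈ S` and with `v_{t+j} ∈ S`.
Independence forbids consecutive elements of `F`, elements `j, j + k` of `G`, and common
elements of `F` and `G`. The first two give `|F|, |G| ≤ k`, so `|I_t ∩ S| = 2k` forces
`|F| = |G| = k`: every offset lies in `F` or `G`, and `G` meets every pair `{i, i + k}`. Hence
`i ∈ F ↔ i + k ∉ F`, which together with the absence of consecutive elements makes `F`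
alternate; as `k` is even this is only consistent with `0 ∈ F`, and by reflection `2k - 1 ∈ F`.
Then `k, k - 1 ∉ F`, so `k, k - 1 ∈ G`. The vertices `u_t, u_{t+2k-1}, v_{t+k}, v_{t+k-1}` of `S`
are neighbours of `u_{t-1}, u_{t+2k}, v_{t+2k}, v_{t-1}`.
-/

open Finset

section Pattern

variable {k : ℕ}

theorem zero_of_alternating {p : ℕ → Prop} (hk : Even k) (hk0 : 0 < k)
    (hcons : ∀ j, j + 1 < 2 * k → ¬(p j ∧ p (j + 1)))
    (hxor : ∀ i < k, p i ↔ ¬p (i + k)) : p 0 := by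
  by_contra h0
  have hpar : ∀ j < k, p j ↔ Odd j := by
    intro j hj
    induction j with
    | zero => simpa using h0
    | succ j ih =>
      rcases Nat.even_or_odd j with heven | hodd
      · have hjk : p (j + k) := (hxor j (by omega)).not_left.mp
          ((ih (by omega)).not.mpr (Nat.not_odd_iff_even.mpr heven))
        have hj1k : ¬p (j + 1 + k) := fun h =>
          hcons (j + k) (by omega) ⟨hjk, by rwa [show j + k + 1 = j + 1 + k by omega]⟩
        exact iff_of_true ((hxor (j + 1) hj).mpr hj1k) heven.add_one
      · exact iff_of_false (fun h => hcons j (by omega) ⟨(ih (by omega)).mpr hodd, h⟩)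
          (Nat.not_odd_iff_even.mpr hodd.add_one)
  have hpk : p k := by simpa using (hxor 0 hk0).not_left.mp h0
  have hpk1 : p (k - 1) := (hpar (k - 1) (by omega)).mpr (Nat.Even.sub_odd hk0 hk odd_one)
  exact hcons (k - 1) (by omega) ⟨hpk1, by rwa [Nat.sub_add_cancel hk0]⟩

theorem last_of_alternating {p : ℕ → Prop} (hk : Even k) (hk0 : 0 < k)
    (hcons : ∀ j, j + 1 < 2 * k → ¬(p j ∧ p (j + 1)))
    (hxor : ∀ i < k, p i ↔ ¬p (i + k)) : p (2 * k - 1) := by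
  refine zero_of_alternating (p := fun j => p (2 * k - 1 - j)) hk hk0 ?_ ?_
  · rintro j hj ⟨h, h'⟩
    refine hcons (2 * k - 1 - (j + 1)) (by omega) ⟨h', ?_⟩
    rwa [show 2 * k - 1 - (j + 1) + 1 = 2 * k - 1 - j by omega]
  · intro i hi
    have := hxor (k - 1 - i) (by omega)
    rw [show k - 1 - i + k = 2 * k - 1 - i by omega] at this
    rw [show 2 * k - 1 - (i + k) = k - 1 - i by omega]
    tauto

end Pattern

section Counting

variable {k : ℕ} {F G : Finset ℕ}

theorem card_le_of_succ_notMem (hF : F ⊆ range (2 * k)) (hcons : ∀ j ∈ F, j + 1 ∉ F) :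
    #F ≤ k := by
  simpa using card_le_card_of_injOn (t := range k) (· / 2)
    (fun j hj => by have := mem_range.mp (hF hj); simp only [coe_range, Set.mem_Iio]; omega)
    (fun a ha b hb hab => by
      by_contra hne
      have : b = a + 1 ∨ a = b + 1 := by simp only at hab; omega
      rcases this with rfl | rfl
      exacts [hcons a ha hb, hcons b hb ha])

theorem card_le_card_filter_of_add_notMem (hG : G ⊆ range (2 * k))
    (hshift : ∀ j ∈ G, j + k ∉ G) : #G ≤ #{i ∈ range k | i ∈ G ∨ i + k ∈ G} := by
  refine card_le_card_of_injOn (fun j => if j < k then j else j - k) (fun j hj => ?_)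
    (fun a ha b hb hab => ?_)
  · have := mem_range.mp (hG hj)
    simp only [coe_filter, mem_range, Set.mem_ofPred_eq]
    split_ifs with h
    · exact ⟨h, .inl hj⟩
    · exact ⟨by omega, .inr (by rwa [Nat.sub_add_cancel (by omega)])⟩
  · by_contra hne
    simp only at hab
    split_ifs at hab with h h' h'
    · exact hne hab
    · exact hshift a ha (by rwa [show a + k = b by omega])
    · exact hshift b hb (by rwa [show b + k = a by omega])
    · omega

theorem forall_mem_or_mem_of_card_add_card (hF : F ⊆ range (2 * k)) (hG : G ⊆ range (2 * k))
    (hFG : Disjoint F G) (hcons : ∀ j ∈ F, j + 1 ∉ F) (hshift : ∀ j ∈ G, j + k ∉ G)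
    (hcard : #F + #G = 2 * k) :
    (∀ j < 2 * k, j ∈ F ∨ j ∈ G) ∧ ∀ i < k, i ∈ G ∨ i + k ∈ G := by
  have hFk := card_le_of_succ_notMem hF hcons
  have hGk := card_le_card_filter_of_add_notMem hG hshift
  have hfilter : #{i ∈ range k | i ∈ G ∨ i + k ∈ G} ≤ k :=
    (card_filter_le _ _).trans (card_range k).le
  constructor
  · have hunion : F ∪ G = range (2 * k) := eq_of_subset_of_card_le (union_subset hF hG)
      (by rw [card_union_of_disjoint hFG, card_range]; omega)
    intro j hj
    simpa [← mem_union, hunion] using hj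
  · intro i hi
    exact filter_card_eq (p := fun i => i ∈ G ∨ i + k ∈ G) (by rw [card_range]; omega) i
      (mem_range.mpr hi)

theorem mem_of_card_add_card_eq (hk : Even k) (hk0 : 0 < k) (hF : F ⊆ range (2 * k))
    (hG : G ⊆ range (2 * k)) (hFG : Disjoint F G) (hcons : ∀ j ∈ F, j + 1 ∉ F)
    (hshift : ∀ j ∈ G, j + k ∉ G) (hcard : #F + #G = 2 * k) :
    0 ∈ F ∧ 2 * k - 1 ∈ F ∧ k ∈ G ∧ k - 1 ∈ G := by
  obtain ⟨hcover, hpair⟩ := forall_mem_or_mem_of_card_add_card hF hG hFG hcons hshift hcard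
  have hxor : ∀ i < k, i ∈ F ↔ i + k ∉ F := fun i hi =>
    ⟨fun hiF hikF =>
      disjoint_left.mp hFG hikF ((hpair i hi).resolve_left (disjoint_left.mp hFG hiF)),
    fun hikF => (hcover i (by omega)).resolve_right
      fun hiG => hshift i hiG ((hcover (i + k) (by omega)).resolve_left hikF)⟩
  have hcons' : ∀ j, j + 1 < 2 * k → ¬(j ∈ F ∧ j + 1 ∈ F) := fun j _ h => hcons j h.1 h.2
  have h0 : 0 ∈ F := zero_of_alternating hk hk0 hcons' hxor
  have hlast : 2 * k - 1 ∈ F := last_of_alternating hk hk0 hcons' hxor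
  refine ⟨h0, hlast, (hcover k (by omega)).resolve_left ?_,
    (hcover (k - 1) (by omega)).resolve_left ?_⟩
  · simpa using (hxor 0 hk0).mp h0
  · exact fun h => (hxor (k - 1) (by omega)).mp h (by rwa [show k - 1 + k = 2 * k - 1 by omega])

end Counting

section Graph

variable {n k : ℕ}

theorem IsIndep.notMem_of_adj {V : Type*} {G : SimpleGraph V} {s : Finset V} (hs : IsIndep G s)
    {a b : V} (hab : G.Adj a b) (ha : a ∈ s) : b ∉ s :=
  fun hb => hs a ha b hb hab

theorem P_adj_u_u [Nontrivial (ZMod n)] {i j : ZMod n} (h : j = i + 1) :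
    (P n k).Adj (u n i) (u n j) :=
  (SimpleGraph.fromRel_adj _ _ _).mpr ⟨by simp [u, h], .inl h⟩

theorem P_adj_u_v (i : ZMod n) : (P n k).Adj (u n i) (v n i) :=
  (SimpleGraph.fromRel_adj _ _ _).mpr ⟨by simp [u, v], .inl rfl⟩

theorem P_adj_v_v (hk : (k : ZMod n) ≠ 0) {i j : ZMod n} (h : j = i + k) :
    (P n k).Adj (v n i) (v n j) :=
  (SimpleGraph.fromRel_adj _ _ _).mpr ⟨by simpa [v, h] using hk, .inl h⟩

theorem natCast_ne_zero_of_lt (hk0 : 0 < k) (hkn : k < n) : (k : ZMod n) ≠ 0 :=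
  (ZMod.natCast_eq_zero_iff k n).not.mpr (Nat.not_dvd_of_pos_of_lt hk0 hkn)

theorem add_natCast_injOn {m : ℕ} (hm : m ≤ n) (t : ZMod n) :
    Set.InjOn (fun j : ℕ => t + (j : ZMod n)) (range m) := by
  intro a ha b hb hab
  simp only [coe_range, Set.mem_Iio, add_right_inj, ZMod.natCast_eq_natCast_iff'] at ha hb hab
  rwa [Nat.mod_eq_of_lt (by omega), Nat.mod_eq_of_lt (by omega)] at hab

theorem card_segment_inter (h2k : 2 * k ≤ n) (t : ZMod n) (S : Finset (ZMod n ⊕ ZMod n)) :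
    #(segment n k t ∩ S) = #((range (2 * k)).filter fun j : ℕ => u n (t + j) ∈ S) +
      #((range (2 * k)).filter fun j : ℕ => v n (t + j) ∈ S) := by
  classical
  have hinj := add_natCast_injOn h2k t
  rw [segment, union_inter_distrib_right, card_union_of_disjoint, ← filter_mem_eq_inter,
    ← filter_mem_eq_inter, filter_image, filter_image, card_image_of_injOn, card_image_of_injOn]
  · exact fun a ha b hb hab =>
      hinj (filter_subset _ _ ha) (filter_subset _ _ hb) (Sum.inr_injective hab)
  · exact fun a ha b hb hab =>
      hinj (filter_subset _ _ ha) (filter_subset _ _ hb) (Sum.inl_injective hab)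
  · refine (disjoint_left.mpr ?_).mono inter_subset_left inter_subset_left
    simp [u, v]

theorem mem_of_card_segment_inter_eq [Nontrivial (ZMod n)] (hk : Even k) (hk0 : 0 < k)
    (hkn : (k : ZMod n) ≠ 0) (h2k : 2 * k ≤ n) {S : Finset (ZMod n ⊕ ZMod n)}
    (hS : IsIndep (P n k) S) {t : ZMod n} (ht : #(segment n k t ∩ S) = 2 * k) :
    u n t ∈ S ∧ u n (t + (2 * k - 1 : ℕ)) ∈ S ∧ v n (t + k) ∈ S ∧
      v n (t + (k - 1 : ℕ)) ∈ S := by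
  classical
  set F := (range (2 * k)).filter fun j : ℕ => u n (t + j) ∈ S
  set G := (range (2 * k)).filter fun j : ℕ => v n (t + j) ∈ S
  have memF {j : ℕ} (hj : j ∈ F) : u n (t + j) ∈ S := (mem_filter.mp hj).2
  have memG {j : ℕ} (hj : j ∈ G) : v n (t + j) ∈ S := (mem_filter.mp hj).2
  have hcons : ∀ j ∈ F, j + 1 ∉ F := fun j hj hj1 =>
    hS.notMem_of_adj (P_adj_u_u (by push_cast; ring)) (memF hj) (memF hj1)
  have hshift : ∀ j ∈ G, j + k ∉ G := fun j hj hjk =>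
    hS.notMem_of_adj (P_adj_v_v hkn (by push_cast; ring)) (memG hj) (memG hjk)
  have hFG : Disjoint F G := disjoint_left.mpr fun j hjF hjG =>
    hS.notMem_of_adj (P_adj_u_v _) (memF hjF) (memG hjG)
  obtain ⟨h0, hlast, hkG, hk1G⟩ := mem_of_card_add_card_eq hk hk0 (filter_subset _ _)
    (filter_subset _ _) hFG hcons hshift ((card_segment_inter h2k t S).symm.trans ht)
  exact ⟨by simpa using memF h0, memF hlast, memG hkG, memG hk1G⟩

end Graph

theorem type1_neighbors_not_in_S_general (n k : ℕ) (hke : Even k) (hk : 2 ≤ k) (hn : 3 * k ≤ n)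
    (S : Finset (ZMod n ⊕ ZMod n)) (hind : IsIndep (P n k) S)
    (t : ZMod n) (ht : (segment n k t ∩ S).card = 2 * k) :
    u n (t + ((2 * k : ℕ) : ZMod n)) ∉ S ∧ v n (t + ((2 * k : ℕ) : ZMod n)) ∉ S ∧
      u n (t - 1) ∉ S ∧ v n (t - 1) ∉ S := by
  have : Nontrivial (ZMod n) := ZMod.nontrivial_iff.mpr (by omega)
  have hkn := natCast_ne_zero_of_lt (n := n) (by omega : 0 < k) (by omega)
  obtain ⟨hu0, hulast, hvk, hvk1⟩ :=
    mem_of_card_segment_inter_eq hke (by omega) hkn (by omega) hind ht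
  refine ⟨hind.notMem_of_adj (P_adj_u_u ?_) hulast, hind.notMem_of_adj (P_adj_v_v hkn ?_) hvk,
    hind.notMem_of_adj (P_adj_u_u ?_).symm hu0, hind.notMem_of_adj (P_adj_v_v hkn ?_).symm hvk1⟩
  · rw [Nat.cast_sub (by omega)]; push_cast; ring
  · push_cast; ring
  · ring
  · rw [Nat.cast_sub (by omega)]; push_cast; ring

/-- If `S` is a maximum independent set of `P(n,k)` (`k ≥ 2` even, `n ≥ 3k`)
and `|I_t ∩ S| = 2k`, then `u_{t+2k}, v_{t+2k}, u_{t−1}, v_{t−1} ∉ S`. -/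
theorem type1_neighbors_not_in_S (n k : ℕ) (hke : Even k) (hk : 2 ≤ k) (hn : 3 * k ≤ n)
    (S : Finset (ZMod n ⊕ ZMod n)) (hind : IsIndep (P n k) S) (hmax : S.card = alpha n k)
    (t : ZMod n) (ht : (segment n k t ∩ S).card = 2 * k) :
    u n (t + ((2 * k : ℕ) : ZMod n)) ∉ S ∧ v n (t + ((2 * k : ℕ) : ZMod n)) ∉ S ∧
      u n (t - 1) ∉ S ∧ v n (t - 1) ∉ S :=
  type1_neighbors_not_in_S_general n k hke hk hn S hind t ht

end GP
end

section
/- For every integer n > 8: α(P(n,4)) ≥ 7(n−4)/8 + 2 if n ≡ 4 (mod 8); α(P(n,4)) ≥ 7(n−6)/8 + 4 if n ≡ 6 (mod 8); and α(P(n,4)) ≥ 7(n−7)/8 + 5 if n ≡ 7 (mod 8). -/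
open Finset

theorem ZMod.natCast_add_eq_natCast_iff {n x y c : ℕ} (hx : x < n) (hy : y < n) (hc : c ≤ n) :
    ((x + c : ℕ) : ZMod n) = y ↔ x + c = y ∨ x + c = y + n := by
  rw [ZMod.natCast_eq_natCast_iff', Nat.mod_eq_of_lt hy]
  rcases lt_or_ge (x + c) n with h | h
  · rw [Nat.mod_eq_of_lt h]; omega
  · rw [Nat.mod_eq_sub_mod h, Nat.mod_eq_of_lt (by omega)]; omega

theorem ZMod.natCast_inj_of_lt {n x y : ℕ} (hx : x < n) (hy : y < n) :
    (x : ZMod n) = y ↔ x = y :=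
  ⟨fun h => by simpa [ZMod.val_cast_of_lt hx, ZMod.val_cast_of_lt hy] using congrArg ZMod.val h,
    congrArg _⟩

theorem Nat.count_congr {p q : ℕ → Prop} [DecidablePred p] [DecidablePred q] {n : ℕ}
    (h : ∀ x < n, p x ↔ q x) : Nat.count p n = Nat.count q n := by
  simp only [Nat.count_eq_card_filter_range]
  exact congrArg card (filter_congr fun x hx => h x (mem_range.1 hx))

theorem Nat.count_mul_of_periodic {p : ℕ → Prop} [DecidablePred p] {a : ℕ}
    (hp : Function.Periodic p a) (m : ℕ) : Nat.count p (a * m) = m * Nat.count p a := by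
  induction m with
  | zero => simp
  | succ m ih =>
    have hshift : ∀ k < a, p (a * m + k) ↔ p k := fun k _ => by
      rw [add_comm, mul_comm]; exact Iff.of_eq (by simpa using hp.nat_mul m k)
    rw [Nat.mul_succ, Nat.count_add, ih, Nat.succ_mul, Nat.count_congr hshift]

namespace GP

theorem card_le_indepNum {V : Type*} [Finite V] {G : SimpleGraph V} {s : Finset V}
    (h : IsIndep G s) : #s ≤ indepNum G := by
  have := Fintype.ofFinite V
  refine le_csSup ⟨Fintype.card V, ?_⟩ ⟨s, h, rfl⟩
  rintro _ ⟨t, -, rfl⟩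
  exact card_le_univ t

def periodicWithTail (a m : ℕ) (B T : Finset ℕ) (x : ℕ) : Prop :=
  if x < a * m then x % a ∈ B else x - a * m ∈ T

instance (a m : ℕ) (B T : Finset ℕ) : DecidablePred (periodicWithTail a m B T) :=
  fun x => by unfold periodicWithTail; infer_instance

theorem count_periodicWithTail (a m r : ℕ) (B T : Finset ℕ) :
    Nat.count (periodicWithTail a m B T) (a * m + r) =
      m * Nat.count (· % a ∈ B) a + Nat.count (· ∈ T) r := by
  have hperiodic : Function.Periodic (· % a ∈ B) a := fun x => by simp
  have hbody : ∀ x < a * m, periodicWithTail a m B T x ↔ x % a ∈ B := fun x hx => by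
    simp [periodicWithTail, hx]
  have htail : ∀ k < r, periodicWithTail a m B T (a * m + k) ↔ k ∈ T := fun k _ => by
    simp [periodicWithTail]
  rw [Nat.count_add, Nat.count_congr hbody, Nat.count_mul_of_periodic hperiodic,
    Nat.count_congr htail]

section VertexSet

variable (n : ℕ) (pU pV : ℕ → Prop) [DecidablePred pU] [DecidablePred pV]

def vertexSetOf : Finset (ZMod n ⊕ ZMod n) :=
  ({x ∈ range n | pU x}.image Nat.cast).disjSum ({x ∈ range n | pV x}.image Nat.cast)

theorem card_vertexSetOf : #(vertexSetOf n pU pV) = Nat.count pU n + Nat.count pV n := by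
  have hinj (p : ℕ → Prop) [DecidablePred p] :
      Set.InjOn (Nat.cast : ℕ → ZMod n) ({x ∈ range n | p x} : Finset ℕ) := by
    intro x hx y hy hxy
    simp only [coe_filter, mem_range, Set.mem_ofPred_eq] at hx hy
    exact (ZMod.natCast_inj_of_lt hx.1 hy.1).1 hxy
  rw [vertexSetOf, card_disjSum, card_image_of_injOn (hinj pU), card_image_of_injOn (hinj pV),
    Nat.count_eq_card_filter_range, Nat.count_eq_card_filter_range]

theorem isIndep_vertexSetOf {k : ℕ} (hk : k ≤ n)
    (hU : ∀ x < n, ∀ y < n, pU x → pU y → x + 1 ≠ y ∧ x + 1 ≠ y + n)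
    (hUV : ∀ x < n, pU x → ¬ pV x)
    (hV : ∀ x < n, ∀ y < n, pV x → pV y → x + k ≠ y ∧ x + k ≠ y + n) :
    IsIndep (P n k) (vertexSetOf n pU pV) := by
  have hne {c x y : ℕ} (hc : c ≤ n) (hx : x < n) (hy : y < n)
      (h : x + c ≠ y ∧ x + c ≠ y + n) : (y : ZMod n) ≠ x + c := by
    rw [ne_comm, ← Nat.cast_add, Ne, ZMod.natCast_add_eq_natCast_iff hx hy hc]
    omega
  rintro (a | a) ha (b | b) hb hab <;>
    simp only [vertexSetOf, inl_mem_disjSum, inr_mem_disjSum, mem_image, mem_filter,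
      mem_range] at ha hb <;>
    obtain ⟨x, ⟨hx, hpx⟩, rfl⟩ := ha <;> obtain ⟨y, ⟨hy, hpy⟩, rfl⟩ := hb <;>
    simp only [P, SimpleGraph.fromRel_adj, adjFun] at hab
  · rcases hab.2 with h | h
    · exact hne (c := 1) (by omega) hx hy (hU x hx y hy hpx hpy) (by rwa [Nat.cast_one])
    · exact hne (c := 1) (by omega) hy hx (hU y hy x hx hpy hpx) (by rwa [Nat.cast_one])
  · exact hUV x hx hpx ((ZMod.natCast_inj_of_lt hy hx).1 (hab.2.resolve_right id) ▸ hpy)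
  · exact hUV y hy hpy ((ZMod.natCast_inj_of_lt hx hy).1 (hab.2.resolve_left id) ▸ hpx)
  · rcases hab.2 with h | h
    · exact hne hk hx hy (hV x hx y hy hpx hpy) h
    · exact hne hk hy hx (hV y hy x hx hpy hpx) h

end VertexSet

def outerTail : ℕ → Finset ℕ
  | 4 => {1, 3}
  | 6 => {1, 4}
  | 7 => {1, 3, 5}
  | _ => ∅

def innerTail : ℕ → Finset ℕ
  | 6 => {2, 5}
  | 7 => {4, 6}
  | _ => ∅

theorem le_alpha_eight_mul_add {m r : ℕ} (hm : 0 < m) (hr : r = 4 ∨ r = 6 ∨ r = 7) :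
    7 * m + (r - 2) ≤ alpha (8 * m + r) 4 := by
  set pU := periodicWithTail 8 m {1, 3, 6} (outerTail r)
  set pV := periodicWithTail 8 m {2, 4, 5, 7} (innerTail r)
  have hindep : IsIndep (P (8 * m + r) 4) (vertexSetOf (8 * m + r) pU pV) := by
    rcases hr with rfl | rfl | rfl <;>
      refine isIndep_vertexSetOf _ _ _ (by omega) (fun x hx y hy hpx hpy => ?_)
        (fun x hx hpx hpy => ?_) (fun x hx y hy hpx hpy => ?_) <;>
      simp only [pU, pV, periodicWithTail, outerTail, innerTail, mem_insert, mem_singleton,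
        notMem_empty] at hpx hpy <;>
      split_ifs at hpx hpy <;> omega
  have hblock : Nat.count (· % 8 ∈ ({1, 3, 6} : Finset ℕ)) 8 +
      Nat.count (· % 8 ∈ ({2, 4, 5, 7} : Finset ℕ)) 8 = 7 := by decide
  have htail : Nat.count (· ∈ outerTail r) r + Nat.count (· ∈ innerTail r) r = r - 2 := by
    rcases hr with rfl | rfl | rfl <;> decide
  have hcard : #(vertexSetOf (8 * m + r) pU pV) = 7 * m + (r - 2) := by
    rw [card_vertexSetOf, count_periodicWithTail, count_periodicWithTail]
    linear_combination m * hblock + htail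
  have : NeZero (8 * m + r) := ⟨by omega⟩
  exact hcard ▸ card_le_indepNum hindep

/-- Lower bounds for `α(P(n,4))` for `n > 8` in the residue classes
`4, 6, 7` modulo `8`. -/
theorem alpha_Pn4_lower (n : ℕ) (hn : 8 < n) :
    (n % 8 = 4 → 7 * (n - 4) / 8 + 2 ≤ alpha n 4) ∧
    (n % 8 = 6 → 7 * (n - 6) / 8 + 4 ≤ alpha n 4) ∧
    (n % 8 = 7 → 7 * (n - 7) / 8 + 5 ≤ alpha n 4) := by
  have key (r : ℕ) (hr : r = 4 ∨ r = 6 ∨ r = 7) (hnr : n % 8 = r) :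
      7 * (n - r) / 8 + (r - 2) ≤ alpha n 4 := by
    have h := le_alpha_eight_mul_add (m := n / 8) (r := n % 8) (by omega) (by omega)
    rw [Nat.div_add_mod] at h
    omega
  exact ⟨key 4 (by omega), key 6 (by omega), key 7 (by omega)⟩

end GP
end
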